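/- arXiv:1207.0933 — 2 statements merged into one kernel-verified Lean document; each statement's English description precedes it below -/
import Mathlib

section
/- Shifting lemma: Let m ≤ y be reals and let A₀, B₀ be finite multisets of reals all of whose elements are ≤ m, with |A₀| = p and |B₀| = q. Let A = A₀ + r·{y} and B = B₀ + t·{y} (adding r, respectively t, copies of y), and let A' = A₀ + r·{m} and B' = B₀ + t·{m}. Then cut(A, B) = cut(A', B') + (y − m)·(p·t + q·r). -/
/-! Every element of `A₀` and `B₀` lies at or below `m ≤ y`, so moving a copy of `y` down to `m`
shortens its distance to each of them by exactly `y - m`, while the distances among the moved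
copies stay `0`. -/

noncomputable def cut (A B : Multiset ℝ) : ℝ :=
  (A.map (fun a => (B.map (fun b => |a - b|)).sum)).sum

lemma cut_comm (A B : Multiset ℝ) : cut A B = cut B A := by
  simp only [cut, Multiset.sum_map_sum_map A B, abs_sub_comm]

lemma cut_add_left (A C B : Multiset ℝ) : cut (A + C) B = cut A B + cut C B := by
  simp [cut]

lemma cut_add_right (A B C : Multiset ℝ) : cut A (B + C) = cut A B + cut A C := by
  simp [cut, Multiset.sum_map_add]

lemma cut_add_add (A C B D : Multiset ℝ) :
    cut (A + C) (B + D) = cut A B + cut A D + cut C B + cut C D := by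
  rw [cut_add_left, cut_add_right, cut_add_right, add_assoc (cut A B + cut A D)]

lemma cut_replicate_right (A : Multiset ℝ) (t : ℕ) (y : ℝ) :
    cut A (Multiset.replicate t y) = t * (A.map (fun a => |a - y|)).sum := by
  simp [cut, Multiset.map_replicate, Multiset.sum_replicate, Multiset.sum_map_mul_left,
    nsmul_eq_mul]

lemma cut_replicate_self (r t : ℕ) (x : ℝ) :
    cut (Multiset.replicate r x) (Multiset.replicate t x) = 0 := by
  simp [cut_replicate_right, Multiset.map_replicate]

lemma abs_sub_eq_abs_sub_add_of_le {a m y : ℝ} (ham : a ≤ m) (hmy : m ≤ y) :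
    |a - y| = |a - m| + (y - m) := by
  rw [abs_of_nonpos (by linarith), abs_of_nonpos (by linarith)]
  ring

lemma cut_replicate_right_of_le {A : Multiset ℝ} {m y : ℝ} (hA : ∀ a ∈ A, a ≤ m)
    (hmy : m ≤ y) (t : ℕ) :
    cut A (Multiset.replicate t y)
      = cut A (Multiset.replicate t m) + t * Multiset.card A * (y - m) := by
  have hsum : (A.map (fun a => |a - y|)).sum
      = (A.map (fun a => |a - m|)).sum + Multiset.card A * (y - m) := by
    rw [Multiset.map_congr rfl fun a ha => abs_sub_eq_abs_sub_add_of_le (hA a ha) hmy,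
      Multiset.sum_map_add]
    simp [nsmul_eq_mul]
  rw [cut_replicate_right, cut_replicate_right, hsum]
  ring

theorem cut_shift (m y : ℝ) (hmy : m ≤ y) (A₀ B₀ : Multiset ℝ)
    (hA₀ : ∀ z ∈ A₀, z ≤ m) (hB₀ : ∀ z ∈ B₀, z ≤ m)
    (p q r t : ℕ) (hp : Multiset.card A₀ = p) (hq : Multiset.card B₀ = q) :
    cut (A₀ + Multiset.replicate r y) (B₀ + Multiset.replicate t y)
      = cut (A₀ + Multiset.replicate r m) (B₀ + Multiset.replicate t m)
        + (y - m) * ((p : ℝ) * t + (q : ℝ) * r) := by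
  rw [cut_add_add, cut_add_add, cut_comm (Multiset.replicate r y),
    cut_comm (Multiset.replicate r m), cut_replicate_right_of_le hA₀ hmy,
    cut_replicate_right_of_le hB₀ hmy, cut_replicate_self, cut_replicate_self, hp, hq]
  ring
end

section
/- Cut value via interval crossings: For finite multisets A, B of reals with all elements in a finite set {x₁ < x₂ < ... < x_l}, cut(A, B) = ∑_{i=1}^{l−1} (x_{i+1} − x_i) · (a_i · (|B| − b_i) + b_i · (|A| − a_i)), where a_i (resp. b_i) is the number of elements of A (resp. B) that are ≤ x_i, counted with multiplicity. -/
open Finset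

theorem Multiset.sum_map_indicator_Iic {α R : Type*} [Preorder α] [DecidableLE α]
    [NonAssocSemiring R] (s : Multiset α) (c : α) :
    (s.map ((Set.Iic c).indicator 1)).sum = ((s.filter (· ≤ c)).card : R) := by
  induction s using Multiset.induction with
  | empty => simp
  | cons a s ih => by_cases h : a ≤ c <;> simp [h, ih, add_comm]

theorem Multiset.sum_map_sum_map_crossings {α R : Type*} [Preorder α] [DecidableLE α]
    [CommRing R] (A B : Multiset α) (c : α) :
    (A.map fun a => (B.map fun b =>
      (Set.Iic c).indicator (1 : α → R) a * (1 - (Set.Iic c).indicator 1 b) +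
        (Set.Iic c).indicator 1 b * (1 - (Set.Iic c).indicator 1 a)).sum).sum =
      ((A.filter (· ≤ c)).card : R) * (card B - (B.filter (· ≤ c)).card) +
        ((B.filter (· ≤ c)).card : R) * (card A - (A.filter (· ≤ c)).card) := by
  simp only [mul_sub, mul_one, sum_map_add, sum_map_sub, sum_map_mul_left, sum_map_mul_right,
    map_const', sum_replicate, sum_map_indicator_Iic, nsmul_eq_mul]
  ring

theorem sum_range_sub_mul_ite_mem_Ico {R : Type*} [Ring R] (x : ℕ → R) {p q n : ℕ}
    (hpq : p ≤ q) (hqn : q ≤ n) :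
    ∑ i ∈ range n, (x (i + 1) - x i) * (if i ∈ Ico p q then 1 else 0) = x q - x p := by
  have hsub : Ico p q ⊆ range n := by
    rw [range_eq_Ico]; exact Ico_subset_Ico (Nat.zero_le p) hqn
  simp only [mul_ite, mul_one, mul_zero, ← sum_filter]
  rw [filter_mem_eq_inter, inter_eq_right.2 hsub, sum_Ico_sub x hpq]

theorem StrictMonoOn.indicator_Iic_apply {α β M : Type*} [LinearOrder α] [Preorder β] [One M]
    [Zero M] {x : α → β} {s : Set α} (hx : StrictMonoOn x s) {i p : α} (hi : i ∈ s)
    (hp : p ∈ s) :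
    (Set.Iic (x i)).indicator (1 : β → M) (x p) = if p ≤ i then 1 else 0 := by
  classical
  rw [Set.indicator_apply]
  simp only [Set.mem_Iic, hx.le_iff_le hp hi, Pi.one_apply]

theorem StrictMonoOn.abs_sub_eq_sum_crossings {R : Type*} [CommRing R] [LinearOrder R]
    [IsStrictOrderedRing R] {l : ℕ} {x : ℕ → R} (hx : StrictMonoOn x (Set.Iio l)) {p q : ℕ}
    (hp : p < l) (hq : q < l) :
    |x p - x q| = ∑ i ∈ range (l - 1), (x (i + 1) - x i) *
      ((Set.Iic (x i)).indicator 1 (x p) * (1 - (Set.Iic (x i)).indicator 1 (x q)) +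
        (Set.Iic (x i)).indicator 1 (x q) * (1 - (Set.Iic (x i)).indicator 1 (x p))) := by
  wlog hpq : p ≤ q generalizing p q
  · rw [abs_sub_comm, this hq hp (le_of_not_ge hpq)]
    simp only [add_comm]
  have hcross : ∀ i ∈ range (l - 1),
      (Set.Iic (x i)).indicator 1 (x p) * (1 - (Set.Iic (x i)).indicator 1 (x q)) +
        (Set.Iic (x i)).indicator 1 (x q) * (1 - (Set.Iic (x i)).indicator 1 (x p)) =
      if i ∈ Ico p q then (1 : R) else 0 := by
    intro i hi
    have hil : i < l := by rw [mem_range] at hi; omega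
    rw [hx.indicator_Iic_apply hil hp, hx.indicator_Iic_apply hil hq]
    simp only [mem_Ico]
    split_ifs <;> (try norm_num) <;> omega
  rw [sum_congr rfl fun i hi => by rw [hcross i hi], sum_range_sub_mul_ite_mem_Ico x hpq (by omega),
    abs_sub_comm, abs_of_nonneg (sub_nonneg.2 (hx.monotoneOn hp hq hpq))]

theorem cut_via_interval_crossings (A B : Multiset ℝ) (l : ℕ) (x : ℕ → ℝ)
    (hmono : ∀ i j, i < j → j < l → x i < x j)
    (hsupp : ∀ u ∈ A + B, ∃ i < l, u = x i) :
    cut A B = ∑ i ∈ Finset.range (l - 1), (x (i + 1) - x i) *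
      ((((A.filter (fun u => u ≤ x i)).card : ℝ) *
          ((Multiset.card B : ℝ) - ((B.filter (fun u => u ≤ x i)).card : ℝ)) +
        ((B.filter (fun u => u ≤ x i)).card : ℝ) *
          ((Multiset.card A : ℝ) - ((A.filter (fun u => u ≤ x i)).card : ℝ)))) := by
  have hx : StrictMonoOn x (Set.Iio l) := fun i _ j hj hij => hmono i j hij hj
  have hpair : ∀ a ∈ A, ∀ b ∈ B, |a - b| = ∑ i ∈ range (l - 1), (x (i + 1) - x i) *
      ((Set.Iic (x i)).indicator 1 a * (1 - (Set.Iic (x i)).indicator 1 b) +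
        (Set.Iic (x i)).indicator 1 b * (1 - (Set.Iic (x i)).indicator 1 a)) := by
    intro a ha b hb
    obtain ⟨p, hp, rfl⟩ := hsupp a (Multiset.mem_add.2 (Or.inl ha))
    obtain ⟨q, hq, rfl⟩ := hsupp b (Multiset.mem_add.2 (Or.inr hb))
    exact hx.abs_sub_eq_sum_crossings hp hq
  rw [cut, Multiset.map_congr rfl fun a ha => by
    rw [Multiset.map_congr rfl (hpair a ha), Multiset.sum_map_sum]]
  simp only [Multiset.sum_map_sum, Multiset.sum_map_mul_left, Multiset.sum_map_sum_map_crossings]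
end
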